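/- arXiv:2504.14061 — 2 statements merged into one kernel-verified Lean document; each statement's English description precedes it below -/
import Mathlib

section
/- Conditional KL bounded by conditional mutual information: let (A_1,…,A_k, A_i, A_j) be jointly distributed finite random variables, and define the estimated joint distribution P̂[A_i, A_j] = ∑_{a} Pr[A_1,…,A_k = a] · Pr[A_i | A_1,…,A_k = a] · Pr[A_j | A_1,…,A_k = a]. Then D_KL(Pr[A_i, A_j] || P̂[A_i, A_j]) ≤ I(A_i; A_j | A_1,…,A_k), the conditional mutual information. -/
open Finset

/-- KL divergence between finite discrete distributions, with the convention
that terms with `P z = 0` contribute 0. -/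
noncomputable def klDiv {Z : Type*} [Fintype Z] (P Q : Z → ℝ) : ℝ :=
  ∑ z, if P z = 0 then 0 else P z * Real.log (P z / Q z)

variable {C I J : Type*} [Fintype C] [Fintype I] [Fintype J]

/-- `Pr[C = c]` obtained from the joint distribution `μ` of `(C, A_i, A_j)`. -/
noncomputable def pC (μ : C → I → J → ℝ) (c : C) : ℝ := ∑ i, ∑ j, μ c i j

/-- Conditional distribution `Pr[A_i = i | C = c]`. -/
noncomputable def condI (μ : C → I → J → ℝ) (c : C) (i : I) : ℝ :=
  (∑ j, μ c i j) / pC μ c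

/-- Conditional distribution `Pr[A_j = j | C = c]`. -/
noncomputable def condJ (μ : C → I → J → ℝ) (c : C) (j : J) : ℝ :=
  (∑ i, μ c i j) / pC μ c

/-- The estimated joint distribution
`P̂[A_i, A_j] = ∑_c Pr[C=c]·Pr[A_i|C=c]·Pr[A_j|C=c]`. -/
noncomputable def estJoint (μ : C → I → J → ℝ) (ij : I × J) : ℝ :=
  ∑ c, pC μ c * (condI μ c ij.1 * condJ μ c ij.2)

/-- The true joint distribution `Pr[A_i, A_j]` (marginalizing out `C`). -/
noncomputable def trueJoint (μ : C → I → J → ℝ) (ij : I × J) : ℝ :=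
  ∑ c, μ c ij.1 ij.2

/-- Conditional mutual information
`I(A_i; A_j | C) = ∑_c Pr[C=c]·D_KL(Pr[A_i,A_j|C=c] ‖ Pr[A_i|C=c] ⊗ Pr[A_j|C=c])`. -/
noncomputable def condMI (μ : C → I → J → ℝ) : ℝ :=
  ∑ c, pC μ c *
    klDiv (fun ij : I × J => μ c ij.1 ij.2 / pC μ c)
      (fun ij : I × J => condI μ c ij.1 * condJ μ c ij.2)

/-!
Write `klTerm a b = a log (a / b)` (with `0 log _ = 0`). The tangent-line bound `log x ≥ 1 - 1/x`
gives `klTerm a b ≥ a log t + a - t b` for every `t > 0`; summing with `t = (∑ a) / (∑ b)` yields the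
log-sum inequality `klTerm (∑ a) (∑ b) ≤ ∑ klTerm a b`. Scaling by `Pr[C = c]` turns the conditional
mutual information into `∑_{i,j} ∑_c klTerm (μ c i j) (Pr[C = c] Pr[i | c] Pr[j | c])`, while
`D_KL(Pr[A_i, A_j] ‖ P̂)` is `∑_{i,j} klTerm (∑_c μ c i j) (∑_c Pr[C = c] Pr[i | c] Pr[j | c])`, so the
theorem is the log-sum inequality over `c`, applied for each `(i, j)`.
-/

noncomputable def klTerm (a b : ℝ) : ℝ := if a = 0 then 0 else a * Real.log (a / b)

lemma klDiv_eq_sum_klTerm {Z : Type*} [Fintype Z] (P Q : Z → ℝ) :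
    klDiv P Q = ∑ z, klTerm (P z) (Q z) := rfl

lemma mul_log_add_sub_le_klTerm {a b t : ℝ} (ha : 0 ≤ a) (hb : 0 ≤ b) (hab : a ≠ 0 → 0 < b)
    (ht : 0 < t) : a * Real.log t + a - t * b ≤ klTerm a b := by
  rcases ha.eq_or_lt with rfl | ha
  · simp only [klTerm, if_true, zero_mul, add_zero, zero_sub, neg_nonpos]
    positivity
  have hb_pos := hab ha.ne'
  have hlog : 1 - (a / (b * t))⁻¹ ≤ Real.log (a / (b * t)) :=
    Real.one_sub_inv_le_log_of_pos (by positivity)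
  have hsplit : Real.log (a / b) = Real.log t + Real.log (a / (b * t)) := by
    rw [← Real.log_mul ht.ne' (by positivity)]
    congr 1
    field_simp
  calc a * Real.log t + a - t * b = a * Real.log t + a * (1 - (a / (b * t))⁻¹) := by
        field_simp
        ring
    _ ≤ a * Real.log t + a * Real.log (a / (b * t)) := by gcongr
    _ = klTerm a b := by rw [klTerm, if_neg ha.ne', hsplit]; ring

lemma klTerm_sum_le_sum_klTerm {ι : Type*} (s : Finset ι) {a b : ι → ℝ}
    (ha : ∀ x ∈ s, 0 ≤ a x) (hb : ∀ x ∈ s, 0 ≤ b x) (hab : ∀ x ∈ s, a x ≠ 0 → 0 < b x) :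
    klTerm (∑ x ∈ s, a x) (∑ x ∈ s, b x) ≤ ∑ x ∈ s, klTerm (a x) (b x) := by
  rcases (sum_nonneg ha).eq_or_lt with hA | hA
  · have hzero : ∀ x ∈ s, a x = 0 := (sum_eq_zero_iff_of_nonneg ha).1 hA.symm
    have hterms : ∑ x ∈ s, klTerm (a x) (b x) = 0 :=
      sum_eq_zero fun x hx => by rw [hzero x hx, klTerm, if_pos rfl]
    rw [← hA, hterms, klTerm, if_pos rfl]
  obtain ⟨x₀, hx₀, hax₀⟩ := exists_ne_zero_of_sum_ne_zero hA.ne'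
  have hB : 0 < ∑ x ∈ s, b x := sum_pos' hb ⟨x₀, hx₀, hab x₀ hx₀ hax₀⟩
  set A := ∑ x ∈ s, a x
  set B := ∑ x ∈ s, b x
  calc klTerm A B = ∑ x ∈ s, (a x * Real.log (A / B) + a x - A / B * b x) := by
        rw [sum_sub_distrib, sum_add_distrib, ← sum_mul, ← mul_sum, klTerm, if_neg hA.ne']
        field_simp
        ring
    _ ≤ ∑ x ∈ s, klTerm (a x) (b x) :=
        sum_le_sum fun x hx => mul_log_add_sub_le_klTerm (ha x hx) (hb x hx) (hab x hx)
          (by positivity)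

lemma mul_klTerm_div {x p q : ℝ} (hp : p ≠ 0) : p * klTerm (x / p) q = klTerm x (p * q) := by
  by_cases hx : x = 0
  · simp [klTerm, hx]
  rw [klTerm, klTerm, if_neg (div_ne_zero hx hp), if_neg hx, div_div, ← mul_assoc,
    mul_div_cancel₀ x hp]

section Conditional

variable {γ : Type*} {μ : γ → I → J → ℝ}

lemma pC_nonneg (hμ : ∀ c i j, 0 ≤ μ c i j) (c : γ) : 0 ≤ pC μ c :=
  sum_nonneg fun i _ => sum_nonneg fun j _ => hμ c i j

lemma condI_nonneg (hμ : ∀ c i j, 0 ≤ μ c i j) (c : γ) (i : I) : 0 ≤ condI μ c i :=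
  div_nonneg (sum_nonneg fun j _ => hμ c i j) (pC_nonneg hμ c)

lemma condJ_nonneg (hμ : ∀ c i j, 0 ≤ μ c i j) (c : γ) (j : J) : 0 ≤ condJ μ c j :=
  div_nonneg (sum_nonneg fun i _ => hμ c i j) (pC_nonneg hμ c)

lemma condI_pos (hμ : ∀ c i j, 0 ≤ μ c i j) {c : γ} {i : I} {j : J} (hc : 0 < pC μ c)
    (h : 0 < μ c i j) : 0 < condI μ c i :=
  div_pos (h.trans_le (single_le_sum (fun j _ => hμ c i j) (mem_univ j))) hc

lemma condJ_pos (hμ : ∀ c i j, 0 ≤ μ c i j) {c : γ} {i : I} {j : J} (hc : 0 < pC μ c)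
    (h : 0 < μ c i j) : 0 < condJ μ c j :=
  div_pos (h.trans_le (single_le_sum (fun i _ => hμ c i j) (mem_univ i))) hc

end Conditional

lemma condMI_eq_sum_klTerm {μ : C → I → J → ℝ} (hpos : ∀ c, 0 < pC μ c) :
    condMI μ = ∑ ij : I × J, ∑ c,
      klTerm (μ c ij.1 ij.2) (pC μ c * (condI μ c ij.1 * condJ μ c ij.2)) := by
  rw [condMI, sum_comm]
  refine sum_congr rfl fun c _ => ?_
  rw [klDiv_eq_sum_klTerm, mul_sum]
  exact sum_congr rfl fun ij _ => mul_klTerm_div (hpos c).ne'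

/-- The KL divergence from the true joint `Pr[A_i, A_j]` to the adaptively estimated
joint `P̂[A_i, A_j]` is at most the conditional mutual information `I(A_i; A_j | C)`. -/
theorem klDiv_est_le_condMI (μ : C → I → J → ℝ)
    (hμ : (∀ c i j, 0 ≤ μ c i j) ∧ ∑ c, ∑ i, ∑ j, μ c i j = 1)
    (hpos : ∀ c, 0 < pC μ c) :
    klDiv (trueJoint μ) (estJoint μ) ≤ condMI μ := by
  have hnn := hμ.1
  rw [condMI_eq_sum_klTerm hpos, klDiv_eq_sum_klTerm]
  refine sum_le_sum fun ij _ => klTerm_sum_le_sum_klTerm univ (fun c _ => hnn c ij.1 ij.2)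
    (fun c _ => ?_) (fun c _ hc => ?_)
  · have := pC_nonneg hnn c
    have := condI_nonneg hnn c ij.1
    have := condJ_nonneg hnn c ij.2
    positivity
  · have hμc := (hnn c ij.1 ij.2).lt_of_ne' hc
    have := hpos c
    have := condI_pos hnn (hpos c) hμc
    have := condJ_pos hnn (hpos c) hμc
    positivity
end

section
/- Rényi divergence between Gaussians: for μ, μ' ∈ ℝ^k and s > 0, the Rényi divergence of order α > 1 between N(μ, s²I_k) and N(μ', s²I_k) equals α·||μ − μ'||²₂ / (2s²). -/
/-! The geometric mixture `P^α Q^(1-α)` of `N(μ, s²I)` and `N(μ', s²I)` is, up to the constant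
factor `exp (α(α-1)‖μ - μ'‖² / (2s²))`, the density of `N(αμ + (1-α)μ', s²I)`, which integrates
to `1`; this holds for every real `α`, by the variance decomposition of `‖·‖²` under an affine
combination. -/

open MeasureTheory Real

/-- Density of the `N(μ, s²·I_k)` Gaussian on `ℝ^k`. -/
noncomputable def gaussPdf (k : ℕ) (s : ℝ) (μ x : EuclideanSpace ℝ (Fin k)) : ℝ :=
  (1 / (s * Real.sqrt (2 * Real.pi))) ^ k * Real.exp (-‖x - μ‖ ^ 2 / (2 * s ^ 2))

lemma norm_sq_affineCombination {E : Type*} [NormedAddCommGroup E] [InnerProductSpace ℝ E]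
    (α : ℝ) (u v : E) :
    α * ‖u‖ ^ 2 + (1 - α) * ‖v‖ ^ 2
      = ‖α • u + (1 - α) • v‖ ^ 2 + α * (1 - α) * ‖u - v‖ ^ 2 := by
  simp only [← real_inner_self_eq_norm_sq, inner_add_add_self, inner_sub_sub_self,
    real_inner_smul_left, real_inner_smul_right]
  ring

lemma integral_exp_neg_norm_sub_sq_div {k : ℕ} {s : ℝ} (hs : 0 < s)
    (μ : EuclideanSpace ℝ (Fin k)) :
    ∫ x, exp (-‖x - μ‖ ^ 2 / (2 * s ^ 2)) = (s * sqrt (2 * π)) ^ k := by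
  have hsq : π / (2 * s ^ 2)⁻¹ = (s * sqrt (2 * π)) ^ (2 : ℝ) := by
    rw [rpow_two, mul_pow, sq_sqrt (by positivity)]
    field_simp
  calc ∫ x, exp (-‖x - μ‖ ^ 2 / (2 * s ^ 2))
      = ∫ x : EuclideanSpace ℝ (Fin k), exp (-(2 * s ^ 2)⁻¹ * ‖x‖ ^ 2) := by
        rw [integral_sub_right_eq_self (fun x => exp (-‖x‖ ^ 2 / (2 * s ^ 2))) μ]
        simp only [div_eq_inv_mul, mul_neg, neg_mul]
    _ = (s * sqrt (2 * π)) ^ k := by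
        rw [GaussianFourier.integral_rexp_neg_mul_sq_norm (by positivity),
          finrank_euclideanSpace_fin, hsq, ← rpow_mul (by positivity),
          mul_div_cancel₀ _ two_ne_zero, rpow_natCast]

lemma integral_gaussPdf (k : ℕ) {s : ℝ} (hs : 0 < s) (μ : EuclideanSpace ℝ (Fin k)) :
    ∫ x, gaussPdf k s μ x = 1 := by
  simp only [gaussPdf]
  rw [integral_const_mul, integral_exp_neg_norm_sub_sq_div hs, ← mul_pow]
  field_simp
  simp

lemma gaussPdf_rpow_mul_gaussPdf_rpow_one_sub (k : ℕ) {s : ℝ} (hs : 0 < s) (α : ℝ)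
    (μ μ' x : EuclideanSpace ℝ (Fin k)) :
    gaussPdf k s μ x ^ α * gaussPdf k s μ' x ^ (1 - α)
      = exp (α * (α - 1) * ‖μ - μ'‖ ^ 2 / (2 * s ^ 2))
          * gaussPdf k s (α • μ + (1 - α) • μ') x := by
  set C : ℝ := (1 / (s * sqrt (2 * π))) ^ k
  have hC : 0 < C := by positivity
  have hmix : α • (x - μ) + (1 - α) • (x - μ') = x - (α • μ + (1 - α) • μ') := by module
  have hexponent := norm_sq_affineCombination α (x - μ) (x - μ')
  rw [hmix, sub_sub_sub_cancel_left, norm_sub_rev μ' μ] at hexponent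
  calc gaussPdf k s μ x ^ α * gaussPdf k s μ' x ^ (1 - α)
      = C ^ (α + (1 - α))
          * exp (-(α * ‖x - μ‖ ^ 2 + (1 - α) * ‖x - μ'‖ ^ 2) / (2 * s ^ 2)) := by
        simp only [gaussPdf]
        rw [mul_rpow hC.le (exp_nonneg _), mul_rpow hC.le (exp_nonneg _), ← exp_mul,
          ← exp_mul, rpow_add hC, mul_mul_mul_comm, ← exp_add]
        ring_nf
    _ = exp (α * (α - 1) * ‖μ - μ'‖ ^ 2 / (2 * s ^ 2))
          * gaussPdf k s (α • μ + (1 - α) • μ') x := by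
        rw [add_sub_cancel, rpow_one, hexponent, gaussPdf, mul_left_comm, ← exp_add]
        congr 2
        ring

/-- Rényi divergence between isotropic Gaussians:
`D_α(N(μ, s²I) ‖ N(μ', s²I)) = α·‖μ − μ'‖² / (2s²)` for `α > 1`, where
`D_α(P‖Q) = (α−1)⁻¹ log ∫ P(x)^α Q(x)^{1−α} dx`. -/
theorem renyiDiv_gaussians (k : ℕ) (s α : ℝ) (hs : 0 < s) (hα : 1 < α)
    (μ μ' : EuclideanSpace ℝ (Fin k)) :
    (α - 1)⁻¹ * Real.log (∫ x, gaussPdf k s μ x ^ α * gaussPdf k s μ' x ^ (1 - α))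
      = α * ‖μ - μ'‖ ^ 2 / (2 * s ^ 2) := by
  simp_rw [gaussPdf_rpow_mul_gaussPdf_rpow_one_sub k hs α μ μ']
  rw [integral_const_mul, integral_gaussPdf k hs, mul_one, log_exp]
  have hα1 : α - 1 ≠ 0 := sub_ne_zero.mpr hα.ne'
  field_simp
end
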